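/- arXiv:2501.07323 — 7 statements merged into one kernel-verified Lean document; each statement's English description precedes it below -/
import Mathlib

section
/- The 2/1-order staggered SBP operators satisfy the summation-by-parts property: for all vectors u ∈ ℝ^N and h ∈ ℝ^(N+1), u^T H_c D_vc h = -h^T H_v D_cv u + h_{N+1}(r^T u) - h_1(l^T u). -/
open Matrix

/-- `H_v = Δx·diag(1/2,1,...,1,1/2)`. -/
noncomputable def Hv21 (N : ℕ) (Δx : ℝ) : Matrix (Fin (N + 1)) (Fin (N + 1)) ℝ :=
  Matrix.diagonal (fun i => if i = 0 ∨ i = Fin.last N then Δx / 2 else Δx)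

/-- `H_c = Δx·I_N`. -/
noncomputable def Hc21 (N : ℕ) (Δx : ℝ) : Matrix (Fin N) (Fin N) ℝ :=
  Matrix.diagonal (fun _ => Δx)

/-- The 2/1-order staggered difference operator `D_cv : ℝ^N → ℝ^{N+1}`. -/
noncomputable def Dcv21 (N : ℕ) (Δx : ℝ) : Matrix (Fin (N + 1)) (Fin N) ℝ :=
  Matrix.of fun i j =>
    (if (i : ℕ) = 0 then
        (if (j : ℕ) = 0 then -1 else if (j : ℕ) = 1 then 1 else 0)
      else if (i : ℕ) = N then
        (if (j : ℕ) = N - 1 then 1 else if (j : ℕ) = N - 2 then -1 else 0)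
      else
        (if (j : ℕ) = (i : ℕ) then 1 else if (j : ℕ) + 1 = (i : ℕ) then -1 else 0)) / Δx

/-- The 2/1-order staggered difference operator `D_vc : ℝ^{N+1} → ℝ^N`,
`(D_vc h)_i = (h_{i+1} - h_i)/Δx`. -/
noncomputable def Dvc21 (N : ℕ) (Δx : ℝ) : Matrix (Fin N) (Fin (N + 1)) ℝ :=
  Matrix.of fun i j =>
    (if (j : ℕ) = (i : ℕ) + 1 then 1 else if (j : ℕ) = (i : ℕ) then -1 else 0) / Δx

/-- Left boundary extrapolation `l = (3/2, -1/2, 0, ..., 0)`. -/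
noncomputable def l21 (N : ℕ) : Fin N → ℝ := fun j =>
  if (j : ℕ) = 0 then 3 / 2 else if (j : ℕ) = 1 then -1 / 2 else 0

/-- Right boundary extrapolation `r = (0, ..., 0, -1/2, 3/2)`. -/
noncomputable def r21 (N : ℕ) : Fin N → ℝ := fun j =>
  if (j : ℕ) = N - 1 then 3 / 2 else if (j : ℕ) = N - 2 then -1 / 2 else 0

lemma two_entry_sum {n : ℕ} {a b : Fin n} (hab : a ≠ b) (ca cb : ℝ) (f : Fin n → ℝ) :
    ∑ j : Fin n, (if j = a then ca else if j = b then cb else 0) * f j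
      = ca * f a + cb * f b := by
  have key : ∀ j : Fin n, (if j = a then ca else if j = b then cb else 0) * f j
      = (if j = a then ca * f j else 0) + (if j = b then cb * f j else 0) := by
    intro j
    by_cases h1 : j = a
    · subst h1; simp [hab]
    · by_cases h2 : j = b
      · subst h2; simp [h1]
      · simp [h1, h2]
  rw [Finset.sum_congr rfl fun j _ => key j, Finset.sum_add_distrib,
    Finset.sum_ite_eq' Finset.univ, Finset.sum_ite_eq' Finset.univ]
  simp

lemma dvc_apply (m : ℕ) (Δx : ℝ) (h : Fin (m + 3) → ℝ) (i : Fin (m + 2)) :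
    (Dvc21 (m + 2) Δx).mulVec h i = (h i.succ - h i.castSucc) / Δx := by
  unfold Dvc21
  simp only [mulVec, dotProduct, Matrix.of_apply]
  have key : ∀ j : Fin (m + 3),
      (if (j : ℕ) = (i : ℕ) + 1 then (1:ℝ) else if (j : ℕ) = (i : ℕ) then -1 else 0) / Δx * h j
      = (if j = i.succ then 1 / Δx else if j = i.castSucc then -1 / Δx else 0) * h j := by
    intro j
    have h1 : (j = i.succ) ↔ ((j : ℕ) = (i : ℕ) + 1) := by rw [Fin.ext_iff]; simp
    have h2 : (j = i.castSucc) ↔ ((j : ℕ) = (i : ℕ)) := by rw [Fin.ext_iff]; simp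
    by_cases c1 : (j : ℕ) = (i : ℕ) + 1
    · simp [c1, h1.mpr c1]
    · by_cases c2 : (j : ℕ) = (i : ℕ)
      · simp [c1, c2, h1, h2]
      · simp [c1, c2, h1, h2]
  rw [Finset.sum_congr rfl fun j _ => key j,
    two_entry_sum (a := i.succ) (b := i.castSucc) (by simp [Fin.ext_iff]) _ _ h]
  ring

lemma dcv_zero (m : ℕ) (Δx : ℝ) (u : Fin (m + 2) → ℝ) :
    (Dcv21 (m + 2) Δx).mulVec u 0 = (u 1 - u 0) / Δx := by
  unfold Dcv21
  simp only [mulVec, dotProduct, Matrix.of_apply]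
  have key : ∀ j : Fin (m + 2),
      ((if ((0 : Fin (m+3)) : ℕ) = 0 then
          (if (j : ℕ) = 0 then (-1:ℝ) else if (j : ℕ) = 1 then 1 else 0)
        else if ((0 : Fin (m+3)) : ℕ) = m + 2 then
          (if (j : ℕ) = m + 2 - 1 then 1 else if (j : ℕ) = m + 2 - 2 then -1 else 0)
        else
          (if (j : ℕ) = ((0 : Fin (m+3)) : ℕ) then 1
            else if (j : ℕ) + 1 = ((0 : Fin (m+3)) : ℕ) then -1 else 0)) / Δx) * u j
      = (if j = (0 : Fin (m + 2)) then -1 / Δx else if j = (1 : Fin (m + 2)) then 1 / Δx else 0) * u j := by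
    intro j
    have h0 : ((0 : Fin (m + 3)) : ℕ) = 0 := rfl
    have h1 : (j = (0 : Fin (m + 2))) ↔ ((j : ℕ) = 0) := by
      rw [Fin.ext_iff]; simp
    have h2 : (j = (1 : Fin (m + 2))) ↔ ((j : ℕ) = 1) := by
      rw [Fin.ext_iff]; simp [Fin.val_one]
    rw [h0]
    by_cases c1 : (j : ℕ) = 0
    · simp [c1, h1, h2, div_eq_mul_inv]
    · by_cases c2 : (j : ℕ) = 1
      · simp [c1, c2, h1, h2]
      · simp [c1, c2, h1, h2]
  rw [Finset.sum_congr rfl fun j _ => key j,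
    two_entry_sum (a := (0 : Fin (m+2))) (b := (1 : Fin (m+2))) (by simp [Fin.ext_iff]) _ _ u]
  ring

lemma dcv_last (m : ℕ) (Δx : ℝ) (u : Fin (m + 2) → ℝ) :
    (Dcv21 (m + 2) Δx).mulVec u (Fin.last (m + 2))
      = (u ⟨m + 1, by omega⟩ - u ⟨m, by omega⟩) / Δx := by
  unfold Dcv21
  simp only [mulVec, dotProduct, Matrix.of_apply]
  have key : ∀ j : Fin (m + 2),
      ((if ((Fin.last (m+2)) : ℕ) = 0 then
          (if (j : ℕ) = 0 then (-1:ℝ) else if (j : ℕ) = 1 then 1 else 0)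
        else if ((Fin.last (m+2)) : ℕ) = m + 2 then
          (if (j : ℕ) = m + 2 - 1 then 1 else if (j : ℕ) = m + 2 - 2 then -1 else 0)
        else
          (if (j : ℕ) = ((Fin.last (m+2)) : ℕ) then 1
            else if (j : ℕ) + 1 = ((Fin.last (m+2)) : ℕ) then -1 else 0)) / Δx) * u j
      = (if j = (⟨m + 1, by omega⟩ : Fin (m + 2)) then 1 / Δx
          else if j = (⟨m, by omega⟩ : Fin (m + 2)) then -1 / Δx else 0) * u j := by
    intro j
    have hl : ((Fin.last (m + 2)) : ℕ) = m + 2 := rfl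
    have e1 : m + 2 - 1 = m + 1 := by omega
    have e2 : m + 2 - 2 = m := by omega
    have h1 : (j = (⟨m + 1, by omega⟩ : Fin (m + 2))) ↔ ((j : ℕ) = m + 1) := by
      rw [Fin.ext_iff]
    have h2 : (j = (⟨m, by omega⟩ : Fin (m + 2))) ↔ ((j : ℕ) = m) := by
      rw [Fin.ext_iff]
    rw [hl, e1, e2]
    by_cases c1 : (j : ℕ) = m + 1
    · simp [c1, h1, h2]
    · by_cases c2 : (j : ℕ) = m
      · simp [c1, c2, h1, h2]
      · simp [c1, c2, h1, h2]
  rw [Finset.sum_congr rfl fun j _ => key j,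
    two_entry_sum (by simp [Fin.ext_iff]) _ _ u]
  ring

lemma dcv_mid (m : ℕ) (Δx : ℝ) (u : Fin (m + 2) → ℝ) (k : Fin (m + 1)) :
    (Dcv21 (m + 2) Δx).mulVec u k.succ.castSucc
      = (u k.succ - u k.castSucc) / Δx := by
  unfold Dcv21
  simp only [mulVec, dotProduct, Matrix.of_apply]
  have hv : ((k.succ.castSucc : Fin (m + 3)) : ℕ) = (k : ℕ) + 1 := by simp
  have key : ∀ j : Fin (m + 2),
      ((if ((k.succ.castSucc : Fin (m+3)) : ℕ) = 0 then
          (if (j : ℕ) = 0 then (-1:ℝ) else if (j : ℕ) = 1 then 1 else 0)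
        else if ((k.succ.castSucc : Fin (m+3)) : ℕ) = m + 2 then
          (if (j : ℕ) = m + 2 - 1 then 1 else if (j : ℕ) = m + 2 - 2 then -1 else 0)
        else
          (if (j : ℕ) = ((k.succ.castSucc : Fin (m+3)) : ℕ) then 1
            else if (j : ℕ) + 1 = ((k.succ.castSucc : Fin (m+3)) : ℕ) then -1 else 0)) / Δx) * u j
      = (if j = k.succ then 1 / Δx else if j = k.castSucc then -1 / Δx else 0) * u j := by
    intro j
    have hk : (k : ℕ) < m + 1 := k.isLt
    have h1 : (j = k.succ) ↔ ((j : ℕ) = (k : ℕ) + 1) := by rw [Fin.ext_iff]; simp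
    have h2 : (j = k.castSucc) ↔ ((j : ℕ) = (k : ℕ)) := by rw [Fin.ext_iff]; simp
    rw [hv, if_neg (by omega), if_neg (by omega)]
    by_cases c1 : (j : ℕ) = (k : ℕ) + 1
    · simp [c1, h1, h2]
    · by_cases c2 : (j : ℕ) = (k : ℕ)
      · simp [c1, c2, h1, h2]
      · simp [c1, c2, h1, h2]
  rw [Finset.sum_congr rfl fun j _ => key j,
    two_entry_sum (by simp [Fin.ext_iff]) _ _ u]
  ring

lemma rdot (m : ℕ) (u : Fin (m + 2) → ℝ) :
    r21 (m + 2) ⬝ᵥ u = 3 / 2 * u ⟨m + 1, by omega⟩ + (-1 / 2) * u ⟨m, by omega⟩ := by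
  unfold r21
  simp only [dotProduct]
  have key : ∀ j : Fin (m + 2),
      (if (j : ℕ) = m + 2 - 1 then (3:ℝ)/2 else if (j : ℕ) = m + 2 - 2 then -1/2 else 0) * u j
      = (if j = (⟨m + 1, by omega⟩ : Fin (m + 2)) then (3:ℝ)/2
          else if j = (⟨m, by omega⟩ : Fin (m + 2)) then -1/2 else 0) * u j := by
    intro j
    have e1 : m + 2 - 1 = m + 1 := by omega
    have e2 : m + 2 - 2 = m := by omega
    rw [e1, e2]
    congr 1
    simp only [Fin.ext_iff]
  rw [Finset.sum_congr rfl fun j _ => key j,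
    two_entry_sum (by simp [Fin.ext_iff]) _ _ u]

lemma ldot (m : ℕ) (u : Fin (m + 2) → ℝ) :
    l21 (m + 2) ⬝ᵥ u = 3 / 2 * u 0 + (-1 / 2) * u 1 := by
  unfold l21
  simp only [dotProduct]
  have key : ∀ j : Fin (m + 2),
      (if (j : ℕ) = 0 then (3:ℝ)/2 else if (j : ℕ) = 1 then -1/2 else 0) * u j
      = (if j = (0 : Fin (m + 2)) then (3:ℝ)/2
          else if j = (1 : Fin (m + 2)) then -1/2 else 0) * u j := by
    intro j
    congr 1
    simp only [Fin.ext_iff, Fin.val_zero, Fin.val_one]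
  rw [Finset.sum_congr rfl fun j _ => key j,
    two_entry_sum (by simp [Fin.ext_iff]) _ _ u]

noncomputable def extR (n : ℕ) (f : Fin n → ℝ) : ℕ → ℝ :=
  fun k => if hk : k < n then f ⟨k, hk⟩ else 0

lemma extR_apply {n k : ℕ} (f : Fin n → ℝ) (hk : k < n) : extR n f k = f ⟨k, hk⟩ :=
  dif_pos hk


/-- The 2/1-order staggered SBP operators satisfy the summation-by-parts property:
`uᵀ H_c D_vc h = -hᵀ H_v D_cv u + h_{N+1}(rᵀu) - h_1(lᵀu)`. -/
theorem sbp_property_21 (N : ℕ) (hN : 2 ≤ N) (Δx : ℝ) (hΔx : 0 < Δx)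
    (u : Fin N → ℝ) (h : Fin (N + 1) → ℝ) :
    u ⬝ᵥ (Hc21 N Δx).mulVec ((Dvc21 N Δx).mulVec h) =
      -(h ⬝ᵥ (Hv21 N Δx).mulVec ((Dcv21 N Δx).mulVec u)) +
        h (Fin.last N) * (r21 N ⬝ᵥ u) - h 0 * (l21 N ⬝ᵥ u) := by
  obtain ⟨m, rfl⟩ : ∃ m, N = m + 2 := ⟨N - 2, by omega⟩
  have hne : Δx ≠ 0 := hΔx.ne'
  set U : ℕ → ℝ := extR (m + 2) u with hUdef
  set H : ℕ → ℝ := extR (m + 3) h with hHdef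
  have hU : ∀ (k : ℕ) (hk : k < m + 2), U k = u ⟨k, hk⟩ := fun k hk => extR_apply u hk
  have hH : ∀ (k : ℕ) (hk : k < m + 3), H k = h ⟨k, hk⟩ := fun k hk => extR_apply h hk
  -- LHS
  have hL : u ⬝ᵥ (Hc21 (m + 2) Δx).mulVec ((Dvc21 (m + 2) Δx).mulVec h)
      = ∑ n ∈ Finset.range (m + 2), U n * (H (n + 1) - H n) := by
    rw [← Fin.sum_univ_eq_sum_range (fun n => U n * (H (n + 1) - H n)) (m + 2)]
    simp only [Hc21, dotProduct, mulVec_diagonal]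
    refine Finset.sum_congr rfl fun i _ => ?_
    rw [dvc_apply]
    have hi : (i : ℕ) < m + 2 := i.isLt
    rw [hU i hi, hH ((i : ℕ) + 1) (by omega), hH (i : ℕ) (by omega)]
    have e1 : (⟨(i : ℕ) + 1, by omega⟩ : Fin (m + 3)) = i.succ := by
      apply Fin.ext; simp
    have e2 : (⟨(i : ℕ), by omega⟩ : Fin (m + 3)) = i.castSucc := by
      apply Fin.ext; simp
    rw [e1, e2, Fin.eta]
    field_simp
    try ring
  -- RHS main sum
  have hR : h ⬝ᵥ (Hv21 (m + 2) Δx).mulVec ((Dcv21 (m + 2) Δx).mulVec u)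
      = H 0 * ((U 1 - U 0) / 2)
        + (∑ n ∈ Finset.range (m + 1), H (n + 1) * (U (n + 1) - U n))
        + H (m + 2) * ((U (m + 1) - U m) / 2) := by
    simp only [dotProduct, Hv21, mulVec_diagonal]
    rw [Fin.sum_univ_castSucc, Fin.sum_univ_succ]
    have t0 : (Fin.castSucc (0 : Fin (m + 2))) = (0 : Fin (m + 3)) := rfl
    rw [t0]
    have term0 : h 0 * ((if (0 : Fin (m + 3)) = 0 ∨ (0 : Fin (m + 3)) = Fin.last (m + 2)
          then Δx / 2 else Δx) * (Dcv21 (m + 2) Δx).mulVec u 0)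
        = H 0 * ((U 1 - U 0) / 2) := by
      rw [if_pos (Or.inl rfl), dcv_zero, hH 0 (by omega), hU 0 (by omega), hU 1 (by omega)]
      have : (⟨0, by omega⟩ : Fin (m + 3)) = 0 := rfl
      rw [this]
      have e0 : (⟨0, by omega⟩ : Fin (m + 2)) = 0 := rfl
      have e1 : (⟨1, by omega⟩ : Fin (m + 2)) = 1 := rfl
      rw [e0, e1]
      field_simp
      try ring
    have termlast : h (Fin.last (m + 2)) * ((if (Fin.last (m + 2) : Fin (m + 3)) = 0
            ∨ Fin.last (m + 2) = Fin.last (m + 2) then Δx / 2 else Δx)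
          * (Dcv21 (m + 2) Δx).mulVec u (Fin.last (m + 2)))
        = H (m + 2) * ((U (m + 1) - U m) / 2) := by
      rw [if_pos (Or.inr rfl), dcv_last, hH (m + 2) (by omega), hU (m + 1) (by omega),
        hU m (by omega)]
      have : (⟨m + 2, by omega⟩ : Fin (m + 3)) = Fin.last (m + 2) := rfl
      rw [this]
      field_simp
      try ring
    have termmid : ∀ k : Fin (m + 1),
        h k.succ.castSucc * ((if k.succ.castSucc = 0 ∨ k.succ.castSucc = Fin.last (m + 2)
            then Δx / 2 else Δx) * (Dcv21 (m + 2) Δx).mulVec u k.succ.castSucc)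
        = (fun n => H (n + 1) * (U (n + 1) - U n)) (k : ℕ) := by
      intro k
      have hk : (k : ℕ) < m + 1 := k.isLt
      have hne0 : ¬(k.succ.castSucc = 0 ∨ k.succ.castSucc = Fin.last (m + 2)) := by
        rintro (hc | hc) <;> {
          have := congrArg Fin.val hc
          simp at this
          try omega }
      rw [if_neg hne0, dcv_mid]
      simp only
      rw [hH ((k : ℕ) + 1) (by omega), hU ((k : ℕ) + 1) (by omega), hU (k : ℕ) (by omega)]
      have e1 : (⟨(k : ℕ) + 1, by omega⟩ : Fin (m + 3)) = k.succ.castSucc := by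
        apply Fin.ext; simp
      have e2 : (⟨(k : ℕ) + 1, by omega⟩ : Fin (m + 2)) = k.succ := by
        apply Fin.ext; simp
      have e3 : (⟨(k : ℕ), by omega⟩ : Fin (m + 2)) = k.castSucc := by
        apply Fin.ext; simp
      rw [e1, e2, e3]
      field_simp
      try ring
    rw [term0, termlast, Finset.sum_congr rfl fun k _ => termmid k,
      Fin.sum_univ_eq_sum_range (fun n => H (n + 1) * (U (n + 1) - U n)) (m + 1)]
  -- boundary dot products
  rw [hL, hR, rdot, ldot]
  have key : (∑ n ∈ Finset.range (m + 2), U n * (H (n + 1) - H n))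
      + (∑ n ∈ Finset.range (m + 1), H (n + 1) * (U (n + 1) - U n))
      = H (m + 2) * U (m + 1) - H 0 * U 0 := by
    rw [Finset.sum_range_succ]
    have comb : (∑ n ∈ Finset.range (m + 1), U n * (H (n + 1) - H n))
        + (∑ n ∈ Finset.range (m + 1), H (n + 1) * (U (n + 1) - U n))
        = ∑ n ∈ Finset.range (m + 1), ((fun k => U k * H k) (n + 1) - (fun k => U k * H k) n) := by
      rw [← Finset.sum_add_distrib]
      exact Finset.sum_congr rfl fun n _ => by ring
    have tel := Finset.sum_range_sub (fun k => U k * H k) (m + 1)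
    simp only at comb tel
    linear_combination comb + tel
  -- rewrite boundary values back to U/H
  have b1 : h (Fin.last (m + 2)) = H (m + 2) := (hH (m + 2) (by omega)).symm
  have b2 : h 0 = H 0 := (hH 0 (by omega)).symm
  have b3 : u ⟨m + 1, by omega⟩ = U (m + 1) := (hU (m + 1) (by omega)).symm
  have b4 : u ⟨m, by omega⟩ = U m := (hU m (by omega)).symm
  have b5 : u 0 = U 0 := (hU 0 (by omega)).symm
  have b6 : u 1 = U 1 := (hU 1 (by omega)).symm
  rw [b1, b2, b3, b4, b5, b6]
  linear_combination key
end

section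
/- The 2/1-order SBP-preserving interpolation operators satisfy u^T H_c P_vc h = h^T H_v P_cv u for all u ∈ ℝ^N, h ∈ ℝ^{N+1}. -/
open Matrix

/-- The 2/1-order interpolation `P_vc : ℝ^{N+1} → ℝ^N`, `(P_vc h)_i = (h_i + h_{i+1})/2`. -/
noncomputable def Pvc21 (N : ℕ) : Matrix (Fin N) (Fin (N + 1)) ℝ :=
  Matrix.of fun i j =>
    if (j : ℕ) = (i : ℕ) ∨ (j : ℕ) = (i : ℕ) + 1 then 1 / 2 else 0

/-- The 2/1-order interpolation `P_cv : ℝ^N → ℝ^{N+1}`, with `(P_cv u)_1 = u_1`,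
`(P_cv u)_{N+1} = u_N` and `(P_cv u)_i = (u_{i-1} + u_i)/2` in the interior. -/
noncomputable def Pcv21 (N : ℕ) : Matrix (Fin (N + 1)) (Fin N) ℝ :=
  Matrix.of fun i j =>
    if (i : ℕ) = 0 then (if (j : ℕ) = 0 then 1 else 0)
    else if (i : ℕ) = N then (if (j : ℕ) = N - 1 then 1 else 0)
    else (if (j : ℕ) + 1 = (i : ℕ) ∨ (j : ℕ) = (i : ℕ) then 1 / 2 else 0)

/-- The 2/1-order SBP-preserving interpolation operators satisfy
`uᵀ H_c P_vc h = hᵀ H_v P_cv u` for all `u ∈ ℝ^N`, `h ∈ ℝ^{N+1}`. -/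
theorem sbp_preserving_interp_21 (N : ℕ) (hN : 2 ≤ N) (Δx : ℝ) (hΔx : 0 < Δx)
    (u : Fin N → ℝ) (h : Fin (N + 1) → ℝ) :
    u ⬝ᵥ (Hc21 N Δx).mulVec ((Pvc21 N).mulVec h) =
      h ⬝ᵥ (Hv21 N Δx).mulVec ((Pcv21 N).mulVec u) := by
  have key : (Hc21 N Δx * Pvc21 N)ᵀ = Hv21 N Δx * Pcv21 N := by
    ext j i
    simp only [Matrix.transpose_apply, Hc21, Hv21, Pvc21, Pcv21, Matrix.diagonal_mul,
      Matrix.of_apply]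
    rcases j with ⟨j, hj⟩
    rcases i with ⟨i, hi⟩
    simp only [Fin.ext_iff, Fin.val_last, Fin.val_zero, Fin.val_mk]
    split_ifs
    all_goals try ring
    all_goals exfalso
    all_goals omega
  calc u ⬝ᵥ (Hc21 N Δx).mulVec ((Pvc21 N).mulVec h)
      = u ⬝ᵥ (Hc21 N Δx * Pvc21 N).mulVec h := by rw [Matrix.mulVec_mulVec]
    _ = (Hc21 N Δx * Pvc21 N).vecMul u ⬝ᵥ h := by rw [Matrix.dotProduct_mulVec]
    _ = h ⬝ᵥ (Hc21 N Δx * Pvc21 N)ᵀ.mulVec u := by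
        rw [Matrix.mulVec_transpose, dotProduct_comm]
    _ = h ⬝ᵥ (Hv21 N Δx).mulVec ((Pcv21 N).mulVec u) := by
        rw [key, ← Matrix.mulVec_mulVec]
end

section
/- The SAT-corrected operators D^S_vc = D_vc - (1/2)H_c^{-1}(r+l)(e_r-e_l)^T and D^S_cv = D_cv - (1/2)H_v^{-1}(e_r+e_l)(r-l)^T satisfy the exact anti-adjointness relation u^T H_c D^S_vc h = -h^T H_v D^S_cv u for all u ∈ ℝ^N, h ∈ ℝ^{N+1}. -/
open Matrix

private lemma vecMulVec_mulVec_aux {m n : Type*} [Fintype n] (a : m → ℝ) (b : n → ℝ)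
    (x : n → ℝ) : (Matrix.vecMulVec a b).mulVec x = (b ⬝ᵥ x) • a := by
  funext i
  simp [Matrix.mulVec, Matrix.vecMulVec_apply, dotProduct, Finset.mul_sum, mul_assoc,
    mul_comm, mul_left_comm]

/-- The SAT-corrected operators `D^S_vc = D_vc - (1/2)H_c⁻¹(r+l)(e_r-e_l)ᵀ` and
`D^S_cv = D_cv - (1/2)H_v⁻¹(e_r+e_l)(r-l)ᵀ` satisfy the exact anti-adjointness relation
`uᵀ H_c D^S_vc h = -hᵀ H_v D^S_cv u` for all `u ∈ ℝ^N`, `h ∈ ℝ^{N+1}`. -/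
theorem sat_antiadjoint (N : ℕ)
    (Hc : Matrix (Fin N) (Fin N) ℝ) (Hv : Matrix (Fin (N + 1)) (Fin (N + 1)) ℝ)
    (dc : Fin N → ℝ) (dv : Fin (N + 1) → ℝ)
    (hHc : Hc = Matrix.diagonal dc) (hdc : ∀ i, 0 < dc i)
    (hHv : Hv = Matrix.diagonal dv) (hdv : ∀ i, 0 < dv i)
    (Dvc : Matrix (Fin N) (Fin (N + 1)) ℝ) (Dcv : Matrix (Fin (N + 1)) (Fin N) ℝ)
    (l r : Fin N → ℝ)
    (hsbp : ∀ (u : Fin N → ℝ) (h : Fin (N + 1) → ℝ),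
      u ⬝ᵥ Hc.mulVec (Dvc.mulVec h) =
        -(h ⬝ᵥ Hv.mulVec (Dcv.mulVec u)) + h (Fin.last N) * (r ⬝ᵥ u) - h 0 * (l ⬝ᵥ u))
    (el er : Fin (N + 1) → ℝ)
    (hel : el = Pi.single 0 1) (her : er = Pi.single (Fin.last N) 1)
    (DSvc : Matrix (Fin N) (Fin (N + 1)) ℝ) (DScv : Matrix (Fin (N + 1)) (Fin N) ℝ)
    (hDSvc : DSvc = Dvc - (1 / 2 : ℝ) • (Hc⁻¹ * Matrix.vecMulVec (r + l) (er - el)))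
    (hDScv : DScv = Dcv - (1 / 2 : ℝ) • (Hv⁻¹ * Matrix.vecMulVec (er + el) (r - l))) :
    ∀ (u : Fin N → ℝ) (h : Fin (N + 1) → ℝ),
      u ⬝ᵥ Hc.mulVec (DSvc.mulVec h) = -(h ⬝ᵥ Hv.mulVec (DScv.mulVec u)) := by
  intro u h
  have hcinv : Hc * Hc⁻¹ = 1 := by
    apply Matrix.mul_nonsing_inv
    rw [hHc, Matrix.det_diagonal]
    exact isUnit_iff_ne_zero.mpr (Finset.prod_ne_zero_iff.mpr fun i _ => (hdc i).ne')
  have hvinv : Hv * Hv⁻¹ = 1 := by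
    apply Matrix.mul_nonsing_inv
    rw [hHv, Matrix.det_diagonal]
    exact isUnit_iff_ne_zero.mpr (Finset.prod_ne_zero_iff.mpr fun i _ => (hdv i).ne')
  have key1 : Hc.mulVec ((Hc⁻¹ * Matrix.vecMulVec (r + l) (er - el)).mulVec h)
      = (Matrix.vecMulVec (r + l) (er - el)).mulVec h := by
    rw [Matrix.mulVec_mulVec, ← Matrix.mul_assoc, hcinv, Matrix.one_mul]
  have key2 : Hv.mulVec ((Hv⁻¹ * Matrix.vecMulVec (er + el) (r - l)).mulVec u)
      = (Matrix.vecMulVec (er + el) (r - l)).mulVec u := by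
    rw [Matrix.mulVec_mulVec, ← Matrix.mul_assoc, hvinv, Matrix.one_mul]
  have hdot_er : er ⬝ᵥ h = h (Fin.last N) := by
    simp [her, dotProduct, Pi.single_apply]
  have hdot_el : el ⬝ᵥ h = h 0 := by
    simp [hel, dotProduct, Pi.single_apply]
  rw [hDSvc, hDScv]
  simp only [Matrix.sub_mulVec, Matrix.smul_mulVec, Matrix.mulVec_sub,
    Matrix.mulVec_smul, dotProduct_sub, dotProduct_smul, key1, key2, hsbp,
    vecMulVec_mulVec_aux, smul_eq_mul]
  have h2 : u ⬝ᵥ ((er - el) ⬝ᵥ h) • (r + l)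
      = ((h (Fin.last N)) - h 0) * (r ⬝ᵥ u + l ⬝ᵥ u) := by
    rw [dotProduct_smul, sub_dotProduct, hdot_er, hdot_el, dotProduct_add,
      dotProduct_comm u r, dotProduct_comm u l, smul_eq_mul]
  have h4 : h ⬝ᵥ ((r - l) ⬝ᵥ u) • (er + el)
      = (r ⬝ᵥ u - l ⬝ᵥ u) * (h (Fin.last N) + h 0) := by
    rw [dotProduct_smul, sub_dotProduct, dotProduct_add, dotProduct_comm h er,
      dotProduct_comm h el, hdot_er, hdot_el, smul_eq_mul]
  rw [dotProduct_smul, smul_eq_mul] at h2 h4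
  rw [h2, h4]
  ring
end

section
/- Given the discrete contravariant metric operator Q with blocks W_11 = H_1 J_1 Q^11_1, W_12 = H_1 P_h1 J_h Q^12_h P_2h, W_21 = H_2 P_h2 Q^12_h J_h P_1h, W_22 = H_2 J_2 Q^22_2, and interpolation operators satisfying H_h P_1h = P_h1^T H_1 and H_h P_2h = P_h2^T H_2, the matrix H_v J_v Q = [[W_11, W_12],[W_21, W_22]] is symmetric, i.e., W_12^T = W_21 (and the diagonal blocks are symmetric). -/
open Matrix

/-- The block matrix `H_v J_v Q` built from the discrete contravariant metric operator,
with `W_11 = H_1 J_1 Q^11_1`, `W_12 = H_1 P_h1 J_h Q^12_h P_2h`,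
`W_21 = H_2 P_h2 Q^12_h J_h P_1h`, `W_22 = H_2 J_2 Q^22_2`, is symmetric, given the
SBP-preserving interpolation properties `H_h P_1h = P_h1ᵀ H_1` and `H_h P_2h = P_h2ᵀ H_2`
and all of `H_1, H_2, H_h, J_1, J_2, J_h, Q^11_1, Q^22_2, Q^12_h` diagonal. -/
theorem metric_tensor_symmetric {α β γ : Type*}
    [Fintype α] [Fintype β] [Fintype γ] [DecidableEq α] [DecidableEq β] [DecidableEq γ]
    (h1 j1 q11 : α → ℝ) (h2 j2 q22 : β → ℝ) (hh jh q12 : γ → ℝ)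
    (hpos1 : ∀ i, 0 < h1 i) (hposj1 : ∀ i, 0 < j1 i)
    (hpos2 : ∀ i, 0 < h2 i) (hposj2 : ∀ i, 0 < j2 i)
    (hposh : ∀ i, 0 < hh i) (hposjh : ∀ i, 0 < jh i)
    (Ph1 : Matrix α γ ℝ) (P1h : Matrix γ α ℝ) (Ph2 : Matrix β γ ℝ) (P2h : Matrix γ β ℝ)
    (hinterp1 : Matrix.diagonal hh * P1h = Ph1ᵀ * Matrix.diagonal h1)
    (hinterp2 : Matrix.diagonal hh * P2h = Ph2ᵀ * Matrix.diagonal h2) :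
    (Matrix.fromBlocks
      (Matrix.diagonal h1 * Matrix.diagonal j1 * Matrix.diagonal q11)
      (Matrix.diagonal h1 * Ph1 * Matrix.diagonal jh * Matrix.diagonal q12 * P2h)
      (Matrix.diagonal h2 * Ph2 * Matrix.diagonal q12 * Matrix.diagonal jh * P1h)
      (Matrix.diagonal h2 * Matrix.diagonal j2 * Matrix.diagonal q22)).IsSymm := by
  have hB : (Matrix.diagonal h1 * Ph1 * Matrix.diagonal jh * Matrix.diagonal q12 * P2h)ᵀ
      = Matrix.diagonal h2 * Ph2 * Matrix.diagonal q12 * Matrix.diagonal jh * P1h := by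
    have h2' : P2hᵀ * Matrix.diagonal hh = Matrix.diagonal h2 * Ph2 := by
      have := congrArg Matrix.transpose hinterp2
      simpa [Matrix.transpose_mul, Matrix.diagonal_transpose] using this
    calc (Matrix.diagonal h1 * Ph1 * Matrix.diagonal jh * Matrix.diagonal q12 * P2h)ᵀ
        = P2hᵀ * Matrix.diagonal q12 * Matrix.diagonal jh * (Ph1ᵀ * Matrix.diagonal h1) := by
          simp [Matrix.transpose_mul, Matrix.diagonal_transpose, Matrix.mul_assoc,
            mul_comm]
      _ = P2hᵀ * Matrix.diagonal q12 * Matrix.diagonal jh * (Matrix.diagonal hh * P1h) := by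
          rw [hinterp1]
      _ = (P2hᵀ * Matrix.diagonal hh) * Matrix.diagonal q12 * Matrix.diagonal jh * P1h := by
          simp only [Matrix.diagonal_mul_diagonal, Matrix.mul_assoc]
          congr 1
          simp [Matrix.diagonal_mul_diagonal, mul_comm, mul_left_comm, ← Matrix.mul_assoc]
      _ = Matrix.diagonal h2 * Ph2 * Matrix.diagonal q12 * Matrix.diagonal jh * P1h := by
          rw [h2']
  rw [Matrix.IsSymm, Matrix.fromBlocks_transpose, hB, ← hB]
  simp [Matrix.transpose_mul, Matrix.diagonal_transpose, Matrix.diagonal_mul_diagonal,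
    mul_comm, mul_left_comm]
end

section
/- For a constant-skewness linear mapping with angle α between basis vectors, where the contravariant metric tensor is Q = (1/sin²α)[[1, -cosα],[-cosα, 1]] and Jacobian J = sinα, the positive-definiteness criterion ρ(W_22^{-1/2} W_12^T W_11^{-1} W_12 W_22^{-1/2}) < 1 reduces to (cosα · ρ(P_cv P_vc))² < 1, given ρ(P_1h P_h1 P_2h P_h2) = ρ(P_cv P_vc)². -/
open Matrix Kronecker

/-- The spectral radius of a real matrix: the supremum of the absolute values of its
(complex) spectrum. -/
noncomputable def specRad {k : Type*} [Fintype k] [DecidableEq k]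
    (M : Matrix k k ℝ) : ℝ :=
  sSup {r : ℝ | ∃ μ ∈ spectrum ℂ (M.map (Complex.ofReal ·)), r = ‖μ‖}

/-- The square root of a positive semidefinite matrix, as defined in Mathlib (Dec 2024). -/
noncomputable def Matrix.PosSemidef.sqrt {n : Type*} [Fintype n] [DecidableEq n]
    {A : Matrix n n ℝ} (hA : A.PosSemidef) : Matrix n n ℝ :=
  hA.1.eigenvectorUnitary.1 * diagonal ((↑) ∘ (√·) ∘ hA.1.eigenvalues) *
  (star hA.1.eigenvectorUnitary : Matrix n n ℝ)

lemma psd_sqrt_mul_self {n : Type*} [Fintype n] [DecidableEq n] {A : Matrix n n ℝ}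
    (hA : A.PosSemidef) : Matrix.PosSemidef.sqrt hA * Matrix.PosSemidef.sqrt hA = A := by
  have hspec := hA.1.spectral_theorem
  unfold Matrix.PosSemidef.sqrt
  set U := hA.1.eigenvectorUnitary with hUdef
  have hU : (star U : Matrix n n ℝ) * (U : Matrix n n ℝ) = 1 := by
    exact Unitary.star_mul_self_of_mem U.2
  change A = (U : Matrix n n ℝ) * _ * (star U : Matrix n n ℝ) at hspec
  rw [show ∀ X Z : Matrix n n ℝ, (U : Matrix n n ℝ) * X * Z * ((U : Matrix n n ℝ) * X * Z)
      = (U : Matrix n n ℝ) * (X * (Z * U) * X) * Z from fun X Z => by simp only [Matrix.mul_assoc]]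
  rw [hU, Matrix.mul_one, diagonal_mul_diagonal]
  conv_rhs => rw [hspec]
  congr 3
  funext i
  simp [Real.mul_self_sqrt (hA.eigenvalues_nonneg i)]

section helpers
open Pointwise
set_option linter.unusedSectionVars false


variable {m n : Type*} [Fintype m] [DecidableEq m] [Fintype n] [DecidableEq n]

lemma aux_smul_form (A : Matrix m n ℂ) (B : Matrix n m ℂ) {μ : ℂ} (hμ : μ ≠ 0) :
    μ • (1 : Matrix m m ℂ) - A * B = μ • (1 + ((-μ⁻¹) • A) * B) := by
  rw [smul_add, Matrix.smul_mul, smul_smul, mul_neg, mul_inv_cancel₀ hμ, neg_smul, one_smul,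
    sub_eq_add_neg]

lemma spec_mul_comm_aux (A : Matrix m n ℂ) (B : Matrix n m ℂ) {μ : ℂ} (hμ : μ ≠ 0) :
    μ ∈ spectrum ℂ (A * B) ↔ μ ∈ spectrum ℂ (B * A) := by
  have e1 : (μ • (1 : Matrix m m ℂ) - A * B).det
      = μ ^ Fintype.card m * (1 + ((-μ⁻¹) • A) * B).det := by
    rw [aux_smul_form A B hμ, Matrix.det_smul]
  have e2 : (μ • (1 : Matrix n n ℂ) - B * A).det
      = μ ^ Fintype.card n * (1 + ((-μ⁻¹) • A) * B).det := by
    rw [aux_smul_form B A hμ, Matrix.det_smul,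
      show ((-μ⁻¹) • B) * A = B * ((-μ⁻¹) • A) by rw [Matrix.smul_mul, Matrix.mul_smul],
      ← Matrix.det_one_add_mul_comm]
  rw [spectrum.mem_iff, spectrum.mem_iff, not_iff_not, Matrix.isUnit_iff_isUnit_det,
    Matrix.isUnit_iff_isUnit_det, Algebra.algebraMap_eq_smul_one, Algebra.algebraMap_eq_smul_one,
    e1, e2, isUnit_iff_ne_zero, isUnit_iff_ne_zero,
    mul_ne_zero_iff, mul_ne_zero_iff]
  simp [pow_ne_zero_iff, hμ]

lemma spec_mul_comm_sq (A B : Matrix m m ℂ) : spectrum ℂ (A * B) = spectrum ℂ (B * A) := by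
  ext μ
  rcases eq_or_ne μ 0 with rfl | hμ
  · simp only [spectrum.zero_mem_iff, Matrix.isUnit_iff_isUnit_det, Matrix.det_mul]
    rw [mul_comm]
  · exact spec_mul_comm_aux A B hμ

lemma mapC_mul (A : Matrix m n ℝ) (B : Matrix n m ℝ) :
    ((A * B).map (Complex.ofReal ·)) = A.map (Complex.ofReal ·) * B.map (Complex.ofReal ·) := by
  ext i j
  simp [Matrix.mul_apply]

lemma specRad_def' (M : Matrix m m ℝ) :
    specRad M = sSup ((fun μ : ℂ => ‖μ‖) '' spectrum ℂ (M.map (Complex.ofReal ·))) := by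
  unfold specRad
  congr 1
  ext r
  simp [Set.mem_image, eq_comm]

lemma specSet_bdd (M : Matrix m m ℝ) :
    BddAbove ((fun μ : ℂ => ‖μ‖) '' spectrum ℂ (M.map (Complex.ofReal ·))) :=
  ((Matrix.finite_spectrum _).image _).bddAbove

lemma specSet_nonempty [Nonempty m] (M : Matrix m m ℝ) :
    ((fun μ : ℂ => ‖μ‖) '' spectrum ℂ (M.map (Complex.ofReal ·))).Nonempty :=
  (spectrum.nonempty_of_isAlgClosed_of_finiteDimensional ℂ _).image _

lemma specRad_nonneg [Nonempty m] (M : Matrix m m ℝ) : 0 ≤ specRad M := by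
  rw [specRad_def']
  obtain ⟨r, hr⟩ := specSet_nonempty M
  refine le_trans ?_ (le_csSup (specSet_bdd M) hr)
  obtain ⟨μ, _, rfl⟩ := hr
  exact norm_nonneg μ

lemma specRad_mul_comm_sq (A B : Matrix m m ℝ) : specRad (A * B) = specRad (B * A) := by
  rw [specRad_def', specRad_def', mapC_mul, mapC_mul, spec_mul_comm_sq]

lemma specRad_mul_comm_le [Nonempty m] [Nonempty n] (A : Matrix m n ℝ) (B : Matrix n m ℝ) :
    specRad (A * B) ≤ specRad (B * A) := by
  rw [specRad_def']
  apply csSup_le (specSet_nonempty _)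
  rintro r ⟨μ, hμ, rfl⟩
  rw [mapC_mul] at hμ
  rcases eq_or_ne μ 0 with rfl | hne
  · simpa using specRad_nonneg (B * A)
  · rw [specRad_def']
    apply le_csSup (specSet_bdd _)
    exact ⟨μ, by rw [mapC_mul]; exact (spec_mul_comm_aux _ _ hne).mp hμ, rfl⟩

lemma specRad_mul_comm [Nonempty m] [Nonempty n] (A : Matrix m n ℝ) (B : Matrix n m ℝ) :
    specRad (A * B) = specRad (B * A) :=
  le_antisymm (specRad_mul_comm_le A B) (specRad_mul_comm_le B A)

lemma mapC_smul (c : ℝ) (M : Matrix m m ℝ) :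
    ((c • M).map (Complex.ofReal ·)) = (c : ℂ) • M.map (Complex.ofReal ·) := by
  ext i j
  simp

lemma specRad_smul [Nonempty m] (c : ℝ) (hc : 0 ≤ c) (M : Matrix m m ℝ) :
    specRad (c • M) = c * specRad M := by
  rcases eq_or_lt_of_le hc with rfl | hpos
  · rw [specRad_def']
    rw [show ((0 : ℝ) • M).map (Complex.ofReal ·) = (0 : Matrix m m ℂ) by ext i j; simp]
    rw [spectrum.zero_eq]
    simp
  · rw [specRad_def', specRad_def', mapC_smul]
    have hcu : ((c : ℂ)) ≠ 0 := by exact_mod_cast hpos.ne'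
    rw [show ((c : ℂ)) • M.map (Complex.ofReal ·) = (Units.mk0 (c : ℂ) hcu) • M.map (Complex.ofReal ·)
      from rfl]
    rw [spectrum.unit_smul_eq_smul]
    rw [show (fun μ : ℂ => ‖μ‖) '' ((Units.mk0 (c : ℂ) hcu) • spectrum ℂ (M.map (Complex.ofReal ·)))
        = c • ((fun μ : ℂ => ‖μ‖) '' spectrum ℂ (M.map (Complex.ofReal ·))) from ?_]
    · rw [Real.sSup_smul_of_nonneg hc]
      simp [smul_eq_mul]
    · ext r
      simp only [Set.mem_image, Set.mem_smul_set, Units.smul_def, Units.val_mk0, smul_eq_mul]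
      constructor
      · rintro ⟨x, ⟨μ, hμ, rfl⟩, rfl⟩
        exact ⟨‖μ‖, ⟨μ, hμ, rfl⟩, by simp [norm_mul, Complex.norm_real, Real.norm_eq_abs, abs_of_pos hpos]⟩
      · rintro ⟨x, ⟨μ, hμ, rfl⟩, rfl⟩
        exact ⟨(c : ℂ) * μ, ⟨μ, hμ, rfl⟩, by simp [norm_mul, Complex.norm_real, Real.norm_eq_abs, abs_of_pos hpos]⟩

end helpers

/-- For a constant-skewness linear mapping with angle `α` between the basis vectors
(`Q^11 = Q^22 = 1/sin²α`, `Q^12 = -cosα/sin²α`, `J = sinα`), the positive-definiteness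
criterion `ρ(W_22^{-1/2} W_12ᵀ W_11⁻¹ W_12 W_22^{-1/2}) < 1` reduces to
`(cosα · ρ(P_cv P_vc))² < 1`, given `ρ(P_1h P_h1 P_2h P_h2) = ρ(P_cv P_vc)²`. -/
theorem constant_skew_criterion (N : ℕ) (α : ℝ)
    (hα0 : 0 < α) (hα1 : α < Real.pi / 2)
    (Pvc : Matrix (Fin N) (Fin (N + 1)) ℝ) (Pcv : Matrix (Fin (N + 1)) (Fin N) ℝ)
    (d1 : Fin (N + 1) × Fin N → ℝ) (d2 : Fin N × Fin (N + 1) → ℝ)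
    (dh : Fin (N + 1) × Fin (N + 1) → ℝ)
    (hd1 : ∀ i, 0 < d1 i) (hd2 : ∀ i, 0 < d2 i) (hdh : ∀ i, 0 < dh i)
    (Ph1 : Matrix (Fin (N + 1) × Fin N) (Fin (N + 1) × Fin (N + 1)) ℝ)
    (P1h : Matrix (Fin (N + 1) × Fin (N + 1)) (Fin (N + 1) × Fin N) ℝ)
    (Ph2 : Matrix (Fin N × Fin (N + 1)) (Fin (N + 1) × Fin (N + 1)) ℝ)
    (P2h : Matrix (Fin (N + 1) × Fin (N + 1)) (Fin N × Fin (N + 1)) ℝ)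
    (hPh1 : Ph1 = (1 : Matrix (Fin (N + 1)) (Fin (N + 1)) ℝ) ⊗ₖ Pvc)
    (hP1h : P1h = (1 : Matrix (Fin (N + 1)) (Fin (N + 1)) ℝ) ⊗ₖ Pcv)
    (hPh2 : Ph2 = Pvc ⊗ₖ (1 : Matrix (Fin (N + 1)) (Fin (N + 1)) ℝ))
    (hP2h : P2h = Pcv ⊗ₖ (1 : Matrix (Fin (N + 1)) (Fin (N + 1)) ℝ))
    (hinterp1 : Matrix.diagonal dh * P1h = Ph1ᵀ * Matrix.diagonal d1)
    (hinterp2 : Matrix.diagonal dh * P2h = Ph2ᵀ * Matrix.diagonal d2)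
    (W11 : Matrix (Fin (N + 1) × Fin N) (Fin (N + 1) × Fin N) ℝ)
    (W22 : Matrix (Fin N × Fin (N + 1)) (Fin N × Fin (N + 1)) ℝ)
    (W12 : Matrix (Fin (N + 1) × Fin N) (Fin N × Fin (N + 1)) ℝ)
    (hW11 : W11 = (Real.sin α * (1 / Real.sin α ^ 2)) • Matrix.diagonal d1)
    (hW22 : W22 = (Real.sin α * (1 / Real.sin α ^ 2)) • Matrix.diagonal d2)
    (hW12 : W12 = Matrix.diagonal d1 * Ph1 *
      ((Real.sin α * (-Real.cos α / Real.sin α ^ 2)) •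
        (1 : Matrix (Fin (N + 1) × Fin (N + 1)) (Fin (N + 1) × Fin (N + 1)) ℝ)) * P2h)
    (hW22pd : W22.PosDef)
    (hρ : specRad (P1h * Ph1 * P2h * Ph2) = specRad (Pcv * Pvc) ^ 2) :
    specRad (Matrix.PosSemidef.sqrt hW22pd.inv.posSemidef * W12ᵀ * W11⁻¹ * W12 * Matrix.PosSemidef.sqrt hW22pd.inv.posSemidef)
        < 1 ↔ (Real.cos α * specRad (Pcv * Pvc)) ^ 2 < 1 := by
  have hπ : α < Real.pi := lt_trans hα1 (by linarith [Real.pi_pos])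
  have hsin : 0 < Real.sin α := Real.sin_pos_of_pos_of_lt_pi hα0 hπ
  have hsne : Real.sin α ≠ 0 := ne_of_gt hsin
  set c : ℝ := Real.sin α * (1 / Real.sin α ^ 2) with hcdef
  have hcpos : 0 < c := by rw [hcdef]; positivity
  have hcne : c ≠ 0 := ne_of_gt hcpos
  set s : ℝ := Real.sin α * (-Real.cos α / Real.sin α ^ 2) with hsdef
  clear_value c s
  rcases Nat.eq_zero_or_pos N with rfl | hN
  · -- degenerate case N = 0 : both sides are `0 < 1`
    have hL : specRad (Matrix.PosSemidef.sqrt hW22pd.inv.posSemidef * W12ᵀ * W11⁻¹ * W12 *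
        Matrix.PosSemidef.sqrt hW22pd.inv.posSemidef) = 0 := by
      rw [specRad_def']
      have hempty : spectrum ℂ (((Matrix.PosSemidef.sqrt hW22pd.inv.posSemidef * W12ᵀ * W11⁻¹ * W12 *
          Matrix.PosSemidef.sqrt hW22pd.inv.posSemidef)).map (Complex.ofReal ·)) = ∅ := by
        ext μ
        simp only [spectrum.mem_iff, Set.mem_empty_iff_false, iff_false, not_not]
        exact isUnit_of_subsingleton _
      rw [hempty]
      simp
    have hR : specRad (Pcv * Pvc) = 0 := by
      have h0 : Pcv * Pvc = 0 := by ext i j; simp [Matrix.mul_apply]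
      rw [specRad_def', h0,
        show ((0 : Matrix (Fin (0 + 1)) (Fin (0 + 1)) ℝ).map (Complex.ofReal ·)) = 0 by
          ext i j; simp,
        spectrum.zero_eq]
      simp
    rw [hL, hR]
    norm_num
  · haveI : Nonempty (Fin N) := Fin.pos_iff_nonempty.mp hN
    have hd1ne : ∀ i, d1 i ≠ 0 := fun i => (hd1 i).ne'
    have hd2ne : ∀ i, d2 i ≠ 0 := fun i => (hd2 i).ne'
    -- explicit inverses of the diagonal blocks
    have hW11inv : W11⁻¹ = Matrix.diagonal (fun i => (c * d1 i)⁻¹) := by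
      apply Matrix.inv_eq_right_inv
      rw [hW11, Matrix.smul_mul, Matrix.diagonal_mul_diagonal, ← Matrix.diagonal_smul,
        show (c • fun i => d1 i * (c * d1 i)⁻¹) = (fun _ : Fin (N + 1) × Fin N => (1 : ℝ)) from
          funext fun i => by
            show c * (d1 i * (c * d1 i)⁻¹) = 1
            field_simp
            exact div_self (hd1ne i),
        Matrix.diagonal_one]
    have hW22inv : W22⁻¹ = Matrix.diagonal (fun i => (c * d2 i)⁻¹) := by
      apply Matrix.inv_eq_right_inv
      rw [hW22, Matrix.smul_mul, Matrix.diagonal_mul_diagonal, ← Matrix.diagonal_smul,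
        show (c • fun i => d2 i * (c * d2 i)⁻¹) = (fun _ : Fin N × Fin (N + 1) => (1 : ℝ)) from
          funext fun i => by
            show c * (d2 i * (c * d2 i)⁻¹) = 1
            field_simp
            exact div_self (hd2ne i),
        Matrix.diagonal_one]
    -- rewritten forms of W12
    have hW12' : W12 = s • (Matrix.diagonal d1 * Ph1 * P2h) := by
      rw [hW12, Matrix.mul_smul, Matrix.mul_one, Matrix.smul_mul]
    have hW12T : W12ᵀ = s • (P2hᵀ * (Ph1ᵀ * Matrix.diagonal d1)) := by
      rw [hW12']
      simp only [Matrix.transpose_smul, Matrix.transpose_mul, Matrix.diagonal_transpose,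
        Matrix.mul_assoc]
    -- inner diagonal collapses
    have hDDD : ∀ Z : Matrix (Fin (N + 1) × Fin N) (Fin N × Fin (N + 1)) ℝ,
        Matrix.diagonal d1 * (Matrix.diagonal (fun i => (c * d1 i)⁻¹) *
          (Matrix.diagonal d1 * Z)) = c⁻¹ • (Matrix.diagonal d1 * Z) := by
      intro Z
      rw [← Matrix.mul_assoc, ← Matrix.mul_assoc, Matrix.diagonal_mul_diagonal,
        Matrix.diagonal_mul_diagonal]
      rw [show (fun i => d1 i * (c * d1 i)⁻¹ * d1 i) = fun i => c⁻¹ * d1 i from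
        funext fun i => by field_simp [hcne, hd1ne i]]
      rw [show Matrix.diagonal (fun i => c⁻¹ * d1 i) = c⁻¹ • Matrix.diagonal d1 from by
        rw [← Matrix.diagonal_smul]; rfl]
      rw [Matrix.smul_mul]
    have hD2i : Matrix.diagonal (fun i => (c * d2 i)⁻¹)
        = c⁻¹ • Matrix.diagonal (fun i => (d2 i)⁻¹) := by
      rw [show (fun i => (c * d2 i)⁻¹) = (c⁻¹ • fun i : Fin N × Fin (N + 1) => (d2 i)⁻¹) from
          funext fun i => by
            show (c * d2 i)⁻¹ = c⁻¹ * (d2 i)⁻¹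
            rw [mul_inv],
        Matrix.diagonal_smul]
    have hPh1D1 : ∀ Z : Matrix (Fin (N + 1) × Fin N) (Fin N × Fin (N + 1)) ℝ,
        Ph1ᵀ * (Matrix.diagonal d1 * Z) = Matrix.diagonal dh * (P1h * Z) := by
      intro Z
      rw [← Matrix.mul_assoc, ← hinterp1, Matrix.mul_assoc]
    have hP2hDh : ∀ Z : Matrix (Fin (N + 1) × Fin (N + 1)) (Fin N × Fin (N + 1)) ℝ,
        P2hᵀ * (Matrix.diagonal dh * Z) = Matrix.diagonal d2 * (Ph2 * Z) := by
      intro Z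
      have ht : P2hᵀ * Matrix.diagonal dh = Matrix.diagonal d2 * Ph2 := by
        have := congrArg Matrix.transpose hinterp2
        simpa [Matrix.transpose_mul, Matrix.diagonal_transpose] using this
      rw [← Matrix.mul_assoc, ht, Matrix.mul_assoc]
    -- the central algebraic identity
    have ebig : W12ᵀ * W11⁻¹ * W12 * W22⁻¹ = (Real.cos α ^ 2) •
        (Matrix.diagonal d2 * (Ph2 * (P1h * (Ph1 * (P2h *
          Matrix.diagonal (fun i => (d2 i)⁻¹)))))) := by
      rw [hW12T, hW12', hW11inv, hW22inv, hD2i]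
      simp only [Matrix.smul_mul, Matrix.mul_smul, smul_smul, Matrix.mul_assoc]
      rw [hDDD, Matrix.mul_smul, Matrix.mul_smul, smul_smul, hPh1D1, hP2hDh]
      congr 1
      rw [hsdef, hcdef]
      field_simp
    -- move the sqrt factors around
    have hspec1 : specRad (Matrix.PosSemidef.sqrt hW22pd.inv.posSemidef * W12ᵀ * W11⁻¹ * W12 *
          Matrix.PosSemidef.sqrt hW22pd.inv.posSemidef)
        = specRad (W12ᵀ * W11⁻¹ * W12 * W22⁻¹) := by
      rw [show Matrix.PosSemidef.sqrt hW22pd.inv.posSemidef * W12ᵀ * W11⁻¹ * W12 * Matrix.PosSemidef.sqrt hW22pd.inv.posSemidef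
          = Matrix.PosSemidef.sqrt hW22pd.inv.posSemidef * (W12ᵀ * W11⁻¹ * W12 * Matrix.PosSemidef.sqrt hW22pd.inv.posSemidef) from by
        simp only [Matrix.mul_assoc]]
      rw [specRad_mul_comm_sq]
      rw [Matrix.mul_assoc (W12ᵀ * W11⁻¹ * W12), psd_sqrt_mul_self hW22pd.inv.posSemidef]
    rw [hspec1, ebig, specRad_smul _ (sq_nonneg _)]
    rw [specRad_mul_comm_sq (Matrix.diagonal d2)]
    rw [show Ph2 * (P1h * (Ph1 * (P2h * Matrix.diagonal fun i => (d2 i)⁻¹))) * Matrix.diagonal d2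
        = Ph2 * (P1h * (Ph1 * (P2h * (Matrix.diagonal (fun i => (d2 i)⁻¹) *
          Matrix.diagonal d2)))) from by simp only [Matrix.mul_assoc]]
    rw [Matrix.diagonal_mul_diagonal]
    rw [show (fun i => (d2 i)⁻¹ * d2 i) = fun _ => (1 : ℝ) from
      funext fun i => inv_mul_cancel₀ (hd2ne i)]
    rw [Matrix.diagonal_one, Matrix.mul_one]
    rw [specRad_mul_comm Ph2 (P1h * (Ph1 * P2h))]
    rw [show P1h * (Ph1 * P2h) * Ph2 = P1h * Ph1 * P2h * Ph2 from by
      simp only [Matrix.mul_assoc]]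
    rw [hρ, mul_pow]
end

section
/- Discrete mass conservation: if the discrete gradient is exact on constants (D_hv A_h 1_h = 0, where 1_h is the all-ones vector) and the gradient/divergence anti-adjointness (Qv)^T H_v J_v D_hv A_h h + h^T H_h J_h A_h J_h^{-1}(D_vh + S) J_v Q v = 0 holds for all h, v, then the total mass M = 1_h^T H_h J_h h is conserved under dh/dt = -𝓗 A_h J_h^{-1}(D_vh + S) J_v Q v, i.e., dM/dt = 0. -/
open Matrix

/-- Discrete mass conservation: if the discrete gradient is exact on constants
(`D_hv A_h 1_h = 0`) and the gradient/divergence anti-adjointness holds, then the total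
mass `M = 1_hᵀ H_h J_h h` is conserved under
`dh/dt = -𝓗 A_h J_h⁻¹ (D_vh + S) J_v Q v`. -/
theorem discrete_mass_conservation (nh nv : ℕ)
    (Hh Jh : Matrix (Fin nh) (Fin nh) ℝ) (Hv Jv : Matrix (Fin nv) (Fin nv) ℝ)
    (hHh : Hh.PosDef) (hJh : Jh.PosDef) (hHv : Hv.PosDef) (hJv : Jv.PosDef)
    (Dhv : Matrix (Fin nv) (Fin nh) ℝ) (Dvh S : Matrix (Fin nh) (Fin nv) ℝ)
    (Ah : Matrix (Fin nh) (Fin nh) ℝ) (Q : Matrix (Fin nv) (Fin nv) ℝ)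
    (𝓗 : ℝ) (h𝓗 : 0 < 𝓗)
    (hgrad : (Dhv * Ah).mulVec (fun _ => (1 : ℝ)) = 0)
    (hadj : ∀ (h : Fin nh → ℝ) (v : Fin nv → ℝ),
      (Q.mulVec v) ⬝ᵥ (Hv * Jv).mulVec ((Dhv * Ah).mulVec h) +
        h ⬝ᵥ (Hh * Jh * Ah * Jh⁻¹ * (Dvh + S) * Jv * Q).mulVec v = 0)
    (h : ℝ → Fin nh → ℝ) (v : ℝ → Fin nv → ℝ)
    (hdyn : ∀ t, HasDerivAt h
      (-(𝓗 • (Ah * Jh⁻¹ * (Dvh + S) * Jv * Q).mulVec (v t))) t) :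
    ∀ t, HasDerivAt (fun s => (fun _ => (1 : ℝ)) ⬝ᵥ (Hh * Jh).mulVec (h s)) 0 t := by
  intro t
  -- the linear functional x ↦ 1 ⬝ᵥ (Hh*Jh).mulVec x as a continuous linear map
  set L : (Fin nh → ℝ) →ₗ[ℝ] ℝ :=
    { toFun := fun x => (fun _ => (1 : ℝ)) ⬝ᵥ (Hh * Jh).mulVec x
      map_add' := by intro x y; simp [Matrix.mulVec_add, dotProduct_add]
      map_smul' := by intro c x; simp [Matrix.mulVec_smul, dotProduct_smul] }
  have hL := (L.toContinuousLinearMap.hasFDerivAt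
      (x := h t)).comp_hasDerivAt t (hdyn t)
  have key : L.toContinuousLinearMap (-(𝓗 • (Ah * Jh⁻¹ * (Dvh + S) * Jv * Q).mulVec (v t))) = 0 := by
    have h1 := hadj (fun _ => (1 : ℝ)) (v t)
    rw [hgrad] at h1
    simp only [Matrix.mulVec_zero, dotProduct_zero, zero_add] at h1
    have h2 : (fun _ => (1 : ℝ)) ⬝ᵥ (Hh * Jh).mulVec
        ((Ah * Jh⁻¹ * (Dvh + S) * Jv * Q).mulVec (v t)) = 0 := by
      rw [← h1]
      simp [← Matrix.mulVec_mulVec, Matrix.mul_assoc]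
    show L (-(𝓗 • (Ah * Jh⁻¹ * (Dvh + S) * Jv * Q).mulVec (v t))) = 0
    rw [map_neg, L.map_smul, show L ((Ah * Jh⁻¹ * (Dvh + S) * Jv * Q).mulVec (v t)) = 0 from h2]
    simp
  rw [key] at hL
  exact hL
end

section
/- The multi-block interface projection A_h defined by (A_h h)_m = ((J_h H_h h)_m + (J_h H_h h)_{m*})/((J_h H_h)_{mm} + (J_h H_h)_{m*m*}) on matched interface pairs (and identity elsewhere) satisfies A_h² = A_h and (J_h H_h A_h)^T = J_h H_h A_h, and (A_h h)_m = (A_h h)_{m*} for all matched pairs. -/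
open Matrix

/-- The multi-block interface projection `A_h` associated with a pairing `σ` of interface
indices (an involution; fixed points of `σ` are non-interface indices, where `A_h` acts as
the identity) and the positive diagonal weights `d` of `J_h H_h`:
`(A_h h)_m = (d_m h_m + d_{m*} h_{m*})/(d_m + d_{m*})` on interface pairs. -/
noncomputable def projAh {ι : Type*} [DecidableEq ι] (σ : ι → ι) (d : ι → ℝ) :
    Matrix ι ι ℝ :=
  Matrix.of fun m j =>
    if σ m = m then (if j = m then 1 else 0)
    else if j = m then d m / (d m + d (σ m))
    else if j = σ m then d (σ m) / (d m + d (σ m))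
    else 0

lemma projAh_row {ι : Type*} [DecidableEq ι] (σ : ι → ι) (d : ι → ℝ)
    (m : ι) (hm : σ m ≠ m) (k : ι) :
    projAh σ d m k =
      d m / (d m + d (σ m)) * (if k = m then 1 else 0)
      + d (σ m) / (d m + d (σ m)) * (if k = σ m then 1 else 0) := by
  simp only [projAh, of_apply, if_neg hm]
  by_cases h1 : k = m
  · subst h1
    rw [if_pos rfl, if_pos rfl, if_neg (fun h => hm h.symm)]
    ring
  · rw [if_neg h1, if_neg h1]
    by_cases h2 : k = σ m
    · rw [if_pos h2, if_pos h2]; ring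
    · rw [if_neg h2, if_neg h2]; ring

/-- The multi-block interface projection `A_h` satisfies `A_h² = A_h`,
`(J_h H_h A_h)ᵀ = J_h H_h A_h`, and `(A_h h)_m = (A_h h)_{m*}` for all matched pairs. -/
theorem projAh_properties {ι : Type*} [Fintype ι] [DecidableEq ι]
    (σ : ι → ι) (hinv : ∀ m, σ (σ m) = m)
    (jd hd : ι → ℝ) (hjd : ∀ i, 0 < jd i) (hhd : ∀ i, 0 < hd i)
    (Jh Hh Ah : Matrix ι ι ℝ)
    (hJh : Jh = Matrix.diagonal jd) (hHh : Hh = Matrix.diagonal hd)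
    (hAh : Ah = projAh σ (fun i => jd i * hd i)) :
    Ah * Ah = Ah ∧ (Jh * Hh * Ah)ᵀ = Jh * Hh * Ah ∧
      ∀ (h : ι → ℝ) (m : ι), Ah.mulVec h (σ m) = Ah.mulVec h m := by
  subst hJh hHh hAh
  set d : ι → ℝ := fun i => jd i * hd i with hdd
  have hdpos : ∀ i, 0 < d i := fun i => mul_pos (hjd i) (hhd i)
  have hs : ∀ m, d m + d (σ m) ≠ 0 := fun m => (add_pos (hdpos m) (hdpos (σ m))).ne'
  have hrowfix : ∀ m, σ m = m → ∀ k, projAh σ d m k = if k = m then 1 else 0 := by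
    intro m hm k; simp [projAh, hm]
  have hσne : ∀ m, σ m ≠ m → σ (σ m) ≠ σ m := by
    intro m hm h
    exact hm ((hinv m ▸ h).symm)
  refine ⟨?_, ?_, ?_⟩
  · ext m j
    rw [mul_apply]
    by_cases hm : σ m = m
    · simp_rw [hrowfix m hm, ite_mul, one_mul, zero_mul, Finset.sum_ite_eq', Finset.mem_univ,
        if_pos]
      exact hrowfix m hm j
    · simp_rw [projAh_row σ d m hm, add_mul, Finset.sum_add_distrib, mul_assoc, ite_mul,
        one_mul, zero_mul, mul_ite, mul_zero, Finset.sum_ite_eq', Finset.mem_univ, if_pos]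
      rw [projAh_row σ d m hm j, projAh_row σ d (σ m) (hσne m hm) j, hinv m]
      have h1 : jd m * hd m + jd (σ m) * hd (σ m) ≠ 0 := hs m
      have h2 : jd (σ m) * hd (σ m) + jd m * hd m ≠ 0 := by rw [add_comm]; exact h1
      by_cases hj1 : j = m
      · have hj2 : ¬ j = σ m := fun h => hm (h.symm.trans hj1)
        simp only [if_pos hj1, if_neg hj2]
        field_simp [hs m, (add_comm (d m) (d (σ m))) ▸ hs m]
        ring
      · by_cases hj2 : j = σ m
        · simp only [if_neg hj1, if_pos hj2]
          field_simp [hs m, (add_comm (d m) (d (σ m))) ▸ hs m]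
          ring
        · simp only [if_neg hj1, if_neg hj2]
          ring
  · have hD : Matrix.diagonal jd * Matrix.diagonal hd = Matrix.diagonal d := by
      rw [Matrix.diagonal_mul_diagonal]
    rw [hD]
    ext i j
    rw [transpose_apply, diagonal_mul, diagonal_mul]
    by_cases hij : i = j
    · subst hij; rfl
    · by_cases hi : σ i = i
      · rw [hrowfix i hi, if_neg (fun h : j = i => hij h.symm)]
        by_cases hj : σ j = j
        · rw [hrowfix j hj, if_neg hij, mul_zero, mul_zero]
        · rw [projAh_row σ d j hj i, if_neg hij]
          have hns : ¬ i = σ j := by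
            intro h
            have h2 : σ i = j := by rw [h, hinv]
            exact hij (hi.symm.trans h2)
          rw [if_neg hns]
          ring
      · by_cases hj : σ j = j
        · rw [hrowfix j hj, if_neg hij,
            projAh_row σ d i hi j, if_neg (fun h : j = i => hij h.symm)]
          have hns : ¬ j = σ i := by
            intro h
            rw [h] at hj
            rw [hinv] at hj
            exact hi hj.symm
          rw [if_neg hns]
          ring
        · rw [projAh_row σ d i hi j, projAh_row σ d j hj i,
            if_neg (fun h : j = i => hij h.symm), if_neg hij]
          by_cases hji : j = σ i
          · have hij' : i = σ j := by rw [hji, hinv]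
            rw [if_pos hji, if_pos hij', hji, hinv]
            have h2 : jd (σ i) * hd (σ i) + jd i * hd i ≠ 0 := by
              have := hs i; rw [add_comm] at this; exact this
            have h1 : jd i * hd i + jd (σ i) * hd (σ i) ≠ 0 := hs i
            field_simp
            ring
          · have hij' : ¬ i = σ j := fun h => hji (by rw [h, hinv])
            rw [if_neg hji, if_neg hij']
            ring
  · intro h m
    by_cases hm : σ m = m
    · rw [hm]
    · rw [mulVec, mulVec]
      simp_rw [dotProduct, projAh_row σ d m hm, projAh_row σ d (σ m) (hσne m hm), hinv m,
        add_mul, Finset.sum_add_distrib, mul_assoc, ite_mul, one_mul, zero_mul, mul_ite,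
        mul_zero, Finset.sum_ite_eq', Finset.mem_univ, if_pos]
      rw [add_comm (d (σ m)) (d m)]
      ring
end
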